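/- arXiv:1110.4080 — 2 statements merged into one kernel-verified Lean document; each statement's English description precedes it below -/
import Mathlib

section
/- The saturated lexsegment ideal in K[x_0,...,x_n] whose quotient has a prescribed nonzero Hilbert polynomial p is unique: if L and L' are saturated lexsegment ideals with p_{R/L} = p_{R/L'} = p, then L = L'. -/
/-! In each degree `j`, the monomials outside a lexsegment ideal form an initial segment of the
lex order on the monomials of degree `j`, and their number is the Hilbert function at `j`. Hence
two lexsegment ideals with the same Hilbert function in degree `j` contain the same monomials of
degree `j`, and equal Hilbert polynomials give this for all large `j`. In a saturated lexsegment
ideal `L`, `x^B x_n ∈ L` forces `x^B x_i ∈ L` for every `i` (as `x^B x_i ≥lex x^B x_n`), so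
`x^B ∈ (L : 𝔪) = L`; thus `x^A ∈ L ↔ x^A x_n^N ∈ L`, which moves every monomial into high degree. -/

open MvPolynomial
open Fin.NatCast

noncomputable section

/-- The polynomial ring `K[x_0,…,x_n]` in `n+1` variables. -/
abbrev PR (K : Type*) [Field K] (n : ℕ) := MvPolynomial (Fin (n+1)) K

variable {K : Type*} [Field K] {n : ℕ}

/-- The monomial `x^A`. -/
def mon (A : Fin (n+1) →₀ ℕ) : PR K n := monomial A 1

/-- Total degree of the monomial with exponent vector `A`. -/
def mdeg (A : Fin (n+1) →₀ ℕ) : ℕ := ∑ i, A i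

/-- The largest index of a variable dividing `x^A` (0 if `A = 0`). -/
def maxIdx (A : Fin (n+1) →₀ ℕ) : Fin (n+1) := WithBot.unbotD 0 (A.support.max)

/-- The exponent vector of `(x_i / x_j) · x^A`. -/
def shiftM (A : Fin (n+1) →₀ ℕ) (i j : Fin (n+1)) : Fin (n+1) →₀ ℕ :=
  A + Finsupp.single i 1 - Finsupp.single j 1

/-- `I` is a monomial ideal: generated by a set of monomials. -/
def IsMonomialIdeal (I : Ideal (PR K n)) : Prop :=
  ∃ S : Set (Fin (n+1) →₀ ℕ), I = Ideal.span ((fun A => (mon A : PR K n)) '' S)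

/-- Strongly stable monomial ideal. -/
def StronglyStable (I : Ideal (PR K n)) : Prop :=
  ∀ A : Fin (n+1) →₀ ℕ, mon A ∈ I → ∀ i j : Fin (n+1), A j ≠ 0 → i < j →
    mon (shiftM A i j) ∈ I

/-- Stable monomial ideal. -/
def Stable (I : Ideal (PR K n)) : Prop :=
  ∀ A : Fin (n+1) →₀ ℕ, A ≠ 0 → mon A ∈ I → ∀ i : Fin (n+1), i < maxIdx A →
    mon (shiftM A i (maxIdx A)) ∈ I

/-- `x^A` is a minimal monomial generator of `I`. -/
def MinGen (I : Ideal (PR K n)) (A : Fin (n+1) →₀ ℕ) : Prop :=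
  mon A ∈ I ∧ ∀ B : Fin (n+1) →₀ ℕ, B ≤ A → B ≠ A → mon B ∉ I

/-- The set of exponent vectors of minimal monomial generators of `I`. -/
def Gens (I : Ideal (PR K n)) : Set (Fin (n+1) →₀ ℕ) := {A | MinGen I A}

/-- The irrelevant maximal ideal `(x_0,…,x_n)`. -/
def irrIdeal (K : Type*) [Field K] (n : ℕ) : Ideal (PR K n) :=
  Ideal.span (Set.range fun i : Fin (n+1) => (X i : PR K n))

/-- `I` is saturated: `(I : (x_0,…,x_n)) = I`. -/
def Saturated (I : Ideal (PR K n)) : Prop :=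
  Submodule.colon I (irrIdeal K n) = I

/-- The saturation `∪ₖ (I : (x_0,…,x_n)^k)`. -/
def saturationOf (I : Ideal (PR K n)) : Ideal (PR K n) :=
  ⨆ k : ℕ, Submodule.colon I (((irrIdeal K n) ^ k : Ideal (PR K n)) : Set (PR K n))

/-- The Hilbert function of `R/I`: `j ↦ dim_K [R/I]_j`. -/
def hilbF {σ : Type*} (I : Ideal (MvPolynomial σ K)) (j : ℕ) : ℕ :=
  Module.finrank K
    ((homogeneousSubmodule σ K j).map (Ideal.Quotient.mkₐ K I).toLinearMap)

/-- `p` is the Hilbert polynomial of `R/I`. -/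
def IsHilbPoly {σ : Type*} (I : Ideal (MvPolynomial σ K)) (p : Polynomial ℚ) : Prop :=
  ∃ N : ℕ, ∀ j : ℕ, N ≤ j → p.eval (j : ℚ) = (hilbF I j : ℚ)

/-- The binomial-coefficient polynomial `C(q, k) = q(q-1)⋯(q-k+1)/k!`. -/
def choosePoly (q : Polynomial ℚ) (k : ℕ) : Polynomial ℚ :=
  ((k.factorial : ℚ))⁻¹ • ∏ j ∈ Finset.range k, (q - Polynomial.C (j : ℚ))

/-- The canonical representation `p(z) = Σ_{i=0}^d [C(z+i,i+1) − C(z+i−b_i,i+1)]`. -/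
def canonicalHP (d : ℕ) (b : ℕ → ℕ) : Polynomial ℚ :=
  ∑ i ∈ Finset.range (d+1),
    (choosePoly (Polynomial.X + Polynomial.C (i : ℚ)) (i+1)
      - choosePoly (Polynomial.X + Polynomial.C (i : ℚ) - Polynomial.C (b i : ℚ)) (i+1))

/-- `x^A >_lex x^B`. -/
def LexGt (A B : Fin (n+1) →₀ ℕ) : Prop :=
  ∃ i : Fin (n+1), (∀ j : Fin (n+1), j < i → A j = B j) ∧ B i < A i

/-- `I` is a lexsegment ideal. -/
def IsLexsegment (I : Ideal (PR K n)) : Prop :=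
  IsMonomialIdeal I ∧ ∀ A B : Fin (n+1) →₀ ℕ, mdeg A = mdeg B → mon B ∈ I →
    LexGt A B → mon A ∈ I

/-- `I` is a homogeneous ideal. -/
def Homog (I : Ideal (PR K n)) : Prop :=
  ∀ f ∈ I, ∀ j : ℕ, homogeneousComponent j f ∈ I

/-- The set of right-shifts of `x^A`. -/
def rightShifts (A : Fin (n+1) →₀ ℕ) : Set (Fin (n+1) →₀ ℕ) :=
  {B | ∃ i : Fin (n+1), (i : ℕ) + 2 ≤ n ∧ A i ≠ 0 ∧
    B = shiftM A ((((i : ℕ) + 1 : ℕ)) : Fin (n+1)) i}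

/-- The set of left-shifts of `x^A`. -/
def leftShifts (A : Fin (n+1) →₀ ℕ) : Set (Fin (n+1) →₀ ℕ) :=
  {B | ∃ i : Fin (n+1), 1 ≤ (i : ℕ) ∧ (i : ℕ) + 1 ≤ n ∧ A i ≠ 0 ∧
    B = shiftM A ((((i : ℕ) - 1 : ℕ)) : Fin (n+1)) i}

/-- The monomials `x^A x_r, …, x^A x_{n-1}` with `r = max(x^A)`. -/
def expSet (A : Fin (n+1) →₀ ℕ) : Set (Fin (n+1) →₀ ℕ) :=
  {B | ∃ j : Fin (n+1), ((maxIdx A : ℕ)) ≤ (j : ℕ) ∧ (j : ℕ) + 1 ≤ n ∧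
    B = A + Finsupp.single j 1}

/-- `x^A ≠ 1` is expandable in `I`. -/
def Expandable (I : Ideal (PR K n)) (A : Fin (n+1) →₀ ℕ) : Prop :=
  A ≠ 0 ∧ MinGen I A ∧ ∀ B ∈ rightShifts A, ¬ MinGen I B

/-- `x^A ≠ 1` is contractible in `I`. -/
def Contractible (I : Ideal (PR K n)) (A : Fin (n+1) →₀ ℕ) : Prop :=
  A ≠ 0 ∧ mon A ∉ I ∧ MinGen I (A + Finsupp.single (((n - 1 : ℕ)) : Fin (n+1)) 1) ∧
    ∀ B ∈ leftShifts A, mon B ∈ I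

/-- The expansion of `x^A` in `I`. -/
def expansionIdeal (I : Ideal (PR K n)) (A : Fin (n+1) →₀ ℕ) : Ideal (PR K n) :=
  Ideal.span ((fun B => (mon B : PR K n)) '' ((Gens I \ {A}) ∪ expSet A))

/-- The contraction of `x^A` in `I`. -/
def contractionIdeal (I : Ideal (PR K n)) (A : Fin (n+1) →₀ ℕ) : Ideal (PR K n) :=
  Ideal.span ((fun B => (mon B : PR K n)) '' ((Gens I ∪ {A}) \ expSet A))

/-- Setting `x_{n-1} = x_n = 1` in the exponent vector `A`. -/
def stripLastTwo (A : Fin (n+1) →₀ ℕ) : Fin (n+1) →₀ ℕ :=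
  Finsupp.update (Finsupp.update A (((n : ℕ)) : Fin (n+1)) 0) (((n - 1 : ℕ)) : Fin (n+1)) 0

/-- The double saturation `sat_{x_{n-1},x_n}(I)` (as an ideal of `R`). -/
def doubleSat (I : Ideal (PR K n)) : Ideal (PR K n) :=
  Ideal.span ((fun A => (mon (stripLastTwo A) : PR K n)) '' Gens I)

/-- Restriction of an exponent vector to the first `n` variables. -/
def restrictExp (A : Fin (n+1) →₀ ℕ) : Fin n →₀ ℕ :=
  Finsupp.comapDomain Fin.castSucc A (Fin.castSucc_injective n).injOn

/-- The ideal `I · R^{(1)}` in `K[x_0,…,x_{n-1}]` (for saturated monomial `I`). -/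
def restrictIdeal (I : Ideal (PR K n)) : Ideal (MvPolynomial (Fin n) K) :=
  Ideal.span ((fun A => (monomial (restrictExp A) (1 : K) : MvPolynomial (Fin n) K)) '' Gens I)

/-- Lex order on exponent vectors in `n` variables. -/
def LexGt' (A B : Fin n →₀ ℕ) : Prop :=
  ∃ i : Fin n, (∀ j : Fin n, j < i → A j = B j) ∧ B i < A i

/-- Monomial ideal in `K[x_0,…,x_{n-1}]`. -/
def IsMonomialIdeal' (I : Ideal (MvPolynomial (Fin n) K)) : Prop :=
  ∃ S : Set (Fin n →₀ ℕ),
    I = Ideal.span ((fun A => (monomial A (1 : K) : MvPolynomial (Fin n) K)) '' S)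

/-- Lexsegment ideal in `K[x_0,…,x_{n-1}]`. -/
def IsLexsegment' (I : Ideal (MvPolynomial (Fin n) K)) : Prop :=
  IsMonomialIdeal' I ∧ ∀ A B : Fin n →₀ ℕ, (∑ i, A i) = (∑ i, B i) →
    monomial B (1 : K) ∈ I → LexGt' A B → monomial A (1 : K) ∈ I

/-- `I` is almost lexsegment: saturated strongly stable with `I·R^{(1)}` lexsegment. -/
def AlmostLex (I : Ideal (PR K n)) : Prop :=
  IsMonomialIdeal I ∧ StronglyStable I ∧ Saturated I ∧ IsLexsegment' (restrictIdeal I)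

/-- A graded free resolution of the ideal `I`, with `rank i` the rank of the `i`-th
free module and `twist i k` the degrees of the standard basis elements. -/
structure GradedFreeRes (I : Ideal (PR K n)) where
  rank : ℕ → ℕ
  twist : (i : ℕ) → Fin (rank i) → ℕ
  diff : (i : ℕ) → ((Fin (rank (i+1)) → PR K n) →ₗ[PR K n] (Fin (rank i) → PR K n))
  aug : (Fin (rank 0) → PR K n) →ₗ[PR K n] PR K n
  aug_range : LinearMap.range aug = I
  aug_graded : ∀ k, aug (Pi.single k 1) ∈ homogeneousSubmodule (Fin (n+1)) K (twist 0 k)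
  diff_graded : ∀ i k l, diff i (Pi.single k 1) l = 0 ∨
    (twist i l ≤ twist (i+1) k ∧
      diff i (Pi.single k 1) l ∈ homogeneousSubmodule (Fin (n+1)) K (twist (i+1) k - twist i l))
  exact_aug : LinearMap.range (diff 0) = LinearMap.ker aug
  exact_diff : ∀ i, LinearMap.range (diff (i+1)) = LinearMap.ker (diff i)

/-- A resolution is minimal if all differential entries lie in the irrelevant ideal. -/
def MinimalRes {I : Ideal (PR K n)} (F : GradedFreeRes I) : Prop :=
  ∀ i k l, constantCoeff (F.diff i (Pi.single k 1) l) = 0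

theorem Finset.eq_of_card_eq_of_forall_lt_mem {α : Type*} [LinearOrder α] {d s t : Finset α}
    (hsd : s ⊆ d) (htd : t ⊆ d) (hs : ∀ a ∈ s, ∀ b ∈ d, b < a → b ∈ s)
    (ht : ∀ a ∈ t, ∀ b ∈ d, b < a → b ∈ t) (hst : s.card = t.card) : s = t := by
  refine Finset.eq_of_subset_of_card_le (fun a ha => ?_) hst.ge
  by_contra hat
  have hts : t ⊆ s.erase a := fun b hb => by
    rcases lt_trichotomy a b with hab | rfl | hba
    · exact absurd (ht b hb a (hsd ha) hab) hat
    · exact absurd hb hat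
    · exact Finset.mem_erase.2 ⟨hba.ne, hs a ha b (htd hb) hba⟩
  have := Finset.card_le_card hts
  rw [Finset.card_erase_of_mem ha] at this
  have := Finset.card_pos.2 ⟨a, ha⟩
  omega

lemma mdeg_add (A B : Fin (n+1) →₀ ℕ) : mdeg (A + B) = mdeg A + mdeg B := by
  simp [mdeg, Finset.sum_add_distrib]

lemma mdeg_single (i : Fin (n+1)) (c : ℕ) : mdeg (Finsupp.single i c) = c := by
  simp [mdeg, Finsupp.single_apply]

lemma mon_mul_mon (A B : Fin (n+1) →₀ ℕ) : (mon A : PR K n) * mon B = mon (A + B) := by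
  simp [mon, monomial_mul]

def expsOfDeg (n j : ℕ) : Finset (Fin (n+1) →₀ ℕ) := Finset.finsuppAntidiag Finset.univ j

lemma mem_expsOfDeg {A : Fin (n+1) →₀ ℕ} {j : ℕ} : A ∈ expsOfDeg n j ↔ mdeg A = j := by
  simp [expsOfDeg, mdeg]

lemma lexGt_iff_toLex_lt {A B : Fin (n+1) →₀ ℕ} : LexGt A B ↔ toLex B < toLex A := by
  rw [Finsupp.Lex.lt_iff]
  exact exists_congr fun i => and_congr_left' (forall₂_congr fun j _ => eq_comm)

lemma IsHilbPoly.exists_hilbF_eq {σ : Type*} {I J : Ideal (MvPolynomial σ K)} {p : Polynomial ℚ}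
    (hI : IsHilbPoly I p) (hJ : IsHilbPoly J p) : ∃ N, ∀ j, N ≤ j → hilbF I j = hilbF J j := by
  obtain ⟨N₁, h₁⟩ := hI
  obtain ⟨N₂, h₂⟩ := hJ
  refine ⟨max N₁ N₂, fun j hj => ?_⟩
  exact_mod_cast (h₁ j (le_of_max_le_left hj)).symm.trans (h₂ j (le_of_max_le_right hj))

lemma homogeneousSubmodule_eq_span_mon (j : ℕ) :
    homogeneousSubmodule (Fin (n+1)) K j = Submodule.span K (mon '' {A | mdeg A = j}) := by
  simp_rw [mdeg, ← Finsupp.degree_eq_sum]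
  exact (homogeneousSubmodule_eq_finsupp_supported _ K j).trans (restrictSupport_eq_span K _)

namespace IsMonomialIdeal

variable {I J : Ideal (PR K n)}

lemma mon_mem_of_coeff_ne_zero (hI : IsMonomialIdeal I) {f : PR K n} (hf : f ∈ I)
    {A : Fin (n+1) →₀ ℕ} (hA : coeff A f ≠ 0) : mon A ∈ I := by
  obtain ⟨S, rfl⟩ := hI
  obtain ⟨B, hB, hBA⟩ := mem_ideal_span_monomial_image.1 hf A (mem_support_iff.2 hA)
  rw [← tsub_add_cancel_of_le hBA, ← mon_mul_mon]
  exact Ideal.mul_mem_left _ _ (Ideal.subset_span ⟨B, hB, rfl⟩)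

lemma le_of_forall_mon_mem (hI : IsMonomialIdeal I) (h : ∀ A, mon A ∈ I → mon A ∈ J) :
    I ≤ J := by
  obtain ⟨S, rfl⟩ := hI
  rw [Ideal.span_le]
  rintro _ ⟨A, hA, rfl⟩
  exact h A (Ideal.subset_span ⟨A, hA, rfl⟩)

lemma ext (hI : IsMonomialIdeal I) (hJ : IsMonomialIdeal J) (h : ∀ A, mon A ∈ I ↔ mon A ∈ J) :
    I = J :=
  le_antisymm (hI.le_of_forall_mon_mem fun A => (h A).1) (hJ.le_of_forall_mon_mem fun A => (h A).2)

lemma linearIndependent_mk_mon (hI : IsMonomialIdeal I) :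
    LinearIndependent K fun A : {A // mon A ∉ I} => Ideal.Quotient.mkₐ K I (mon A) := by
  have hmon : LinearIndependent K fun A : {A // mon A ∉ I} => (mon A.1 : PR K n) :=
    (basisMonomials _ K).linearIndependent.comp _ Subtype.val_injective
  refine hmon.map (f := (Ideal.Quotient.mkₐ K I).toLinearMap) ?_
  rw [Submodule.disjoint_def]
  intro f hspan hker
  have hsupp : (f.support : Set _) ⊆ {A | mon A ∉ I} := by
    rw [← mem_restrictSupport_iff (R := K), restrictSupport_eq_span, Set.image_eq_range]
    exact hspan
  have hfI : f ∈ I := by simpa [Ideal.Quotient.eq_zero_iff_mem] using hker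
  ext A
  by_contra hA
  exact hsupp (mem_support_iff.2 hA) (hI.mon_mem_of_coeff_ne_zero hfI hA)

open Classical in
lemma hilbF_eq_card (hI : IsMonomialIdeal I) (j : ℕ) :
    hilbF I j = {A ∈ expsOfDeg n j | mon A ∉ I}.card := by
  set T := {A ∈ expsOfDeg n j | mon A ∉ I}
  let v : T → PR K n ⧸ I := fun A => Ideal.Quotient.mkₐ K I (mon A)
  have hv : LinearIndependent K v :=
    hI.linearIndependent_mk_mon.comp (fun A : T => ⟨A.1, (Finset.mem_filter.1 A.2).2⟩)
      fun A B h => Subtype.ext (congrArg Subtype.val h :)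
  have hspan : (homogeneousSubmodule (Fin (n+1)) K j).map (Ideal.Quotient.mkₐ K I).toLinearMap =
      Submodule.span K (Set.range v) := by
    rw [homogeneousSubmodule_eq_span_mon, Submodule.map_span, Set.image_image]
    refine le_antisymm (Submodule.span_le.2 ?_) (Submodule.span_mono ?_)
    · rintro _ ⟨A, hA, rfl⟩
      by_cases hAI : mon A ∈ I
      · simp [Ideal.Quotient.eq_zero_iff_mem.2 hAI]
      · exact Submodule.subset_span
          ⟨⟨A, Finset.mem_filter.2 ⟨mem_expsOfDeg.2 hA, hAI⟩⟩, rfl⟩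
    · rintro _ ⟨A, rfl⟩
      exact ⟨A, mem_expsOfDeg.1 (Finset.mem_filter.1 A.2).1, rfl⟩
  rw [hilbF, hspan, finrank_span_eq_card hv, Fintype.card_coe]

end IsMonomialIdeal

lemma Saturated.mem_of_forall_mul_X_mem {I : Ideal (PR K n)} (hI : Saturated I) {f : PR K n}
    (h : ∀ i, f * X i ∈ I) : f ∈ I := by
  rw [← hI, irrIdeal, Ideal.colon_span, Submodule.mem_colon]
  rintro _ ⟨i, rfl⟩
  exact h i

namespace IsLexsegment

variable {L L' : Ideal (PR K n)}

open Classical in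
lemma mon_mem_iff_of_hilbF_eq (hL : IsLexsegment L) (hL' : IsLexsegment L') {j : ℕ}
    (hj : hilbF L j = hilbF L' j) {A : Fin (n+1) →₀ ℕ} (hA : mdeg A = j) :
    mon A ∈ L ↔ mon A ∈ L' := by
  have hclosed : ∀ {I : Ideal (PR K n)}, IsLexsegment I →
      ∀ B ∈ {A ∈ expsOfDeg n j | mon A ∉ I}, ∀ C ∈ expsOfDeg n j, LexGt B C →
        C ∈ {A ∈ expsOfDeg n j | mon A ∉ I} := by
    intro I hI B hB C hC hBC
    obtain ⟨hBj, hBI⟩ := Finset.mem_filter.1 hB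
    refine Finset.mem_filter.2 ⟨hC, fun hCI => hBI (hI.2 B C ?_ hCI hBC)⟩
    rw [mem_expsOfDeg.1 hBj, mem_expsOfDeg.1 hC]
  have hstd := Finset.eq_of_card_eq_of_forall_lt_mem (α := Lex (Fin (n+1) →₀ ℕ))
    (Finset.filter_subset _ _) (Finset.filter_subset _ _)
    (fun B hB C hC h => hclosed hL B hB C hC (lexGt_iff_toLex_lt.2 h))
    (fun B hB C hC h => hclosed hL' B hB C hC (lexGt_iff_toLex_lt.2 h))
    ((hL.1.hilbF_eq_card j).symm.trans (hj.trans (hL'.1.hilbF_eq_card j)))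
  have hAj : A ∈ {A ∈ expsOfDeg n j | mon A ∉ L} ↔ A ∈ {A ∈ expsOfDeg n j | mon A ∉ L'} :=
    Finset.ext_iff.1 hstd A
  simp only [Finset.mem_filter, mem_expsOfDeg, hA, true_and] at hAj
  exact not_iff_not.1 hAj

lemma mon_mem_of_add_single_last_mem (hL : IsLexsegment L) (hsat : Saturated L)
    {B : Fin (n+1) →₀ ℕ} (h : mon (B + Finsupp.single (Fin.last n) 1) ∈ L) : mon B ∈ L := by
  refine hsat.mem_of_forall_mul_X_mem fun i => ?_
  change mon B * mon (Finsupp.single i 1) ∈ L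
  rw [mon_mul_mon]
  rcases (Fin.le_last i).eq_or_lt with rfl | hi
  · exact h
  · refine hL.2 _ _ (by simp only [mdeg_add, mdeg_single]) h ⟨i, fun j hj => ?_, ?_⟩
    · simp [hj.ne, (hj.trans hi).ne]
    · simp [hi.ne]

lemma mon_add_single_last_mem_iff (hL : IsLexsegment L) (hsat : Saturated L)
    (B : Fin (n+1) →₀ ℕ) (k : ℕ) :
    mon (B + Finsupp.single (Fin.last n) k) ∈ L ↔ mon B ∈ L := by
  refine ⟨fun h => ?_, fun h => ?_⟩
  · induction k with
    | zero => simpa using h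
    | succ k ih =>
      refine ih (hL.mon_mem_of_add_single_last_mem hsat ?_)
      rwa [add_assoc, ← Finsupp.single_add]
  · rw [← mon_mul_mon]
    exact Ideal.mul_mem_right _ _ h

end IsLexsegment

end

theorem saturated_lexsegment_unique_general
    {K : Type*} [Field K] {n : ℕ} (p : Polynomial ℚ)
    (L L' : Ideal (PR K n))
    (hL1 : IsLexsegment L) (hL2 : Saturated L) (hL3 : IsHilbPoly L p)
    (hL1' : IsLexsegment L') (hL2' : Saturated L') (hL3' : IsHilbPoly L' p) :
    L = L' := by
  obtain ⟨N, hN⟩ := hL3.exists_hilbF_eq hL3'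
  refine hL1.1.ext hL1'.1 fun A => ?_
  rw [← hL1.mon_add_single_last_mem_iff hL2 A N, ← hL1'.mon_add_single_last_mem_iff hL2' A N]
  exact hL1.mon_mem_iff_of_hilbF_eq hL1' (hN _ (by simp [mdeg_add, mdeg_single])) rfl

/-- uniqueness of the saturated lexsegment ideal with a prescribed
nonzero Hilbert polynomial. -/
theorem saturated_lexsegment_unique
    {K : Type*} [Field K] {n : ℕ} (p : Polynomial ℚ) (hp : p ≠ 0)
    (L L' : Ideal (PR K n))
    (hL1 : IsLexsegment L) (hL2 : Saturated L) (hL3 : IsHilbPoly L p)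
    (hL1' : IsLexsegment L') (hL2' : Saturated L') (hL3' : IsHilbPoly L' p) :
    L = L' :=
  saturated_lexsegment_unique_general p L L' hL1 hL2 hL3 hL1' hL2' hL3'
end

section
/- Let I ⊆ R = K[x_0,...,x_n] be a stable monomial ideal with minimal monomial generators x^{A_1},...,x^{A_r}; set l_i = max(x^{A_i}) and d_i = deg x^{A_i}. Then the Hilbert series of R/I is H_{R/I}(t) = (1 − Σ_{i=1}^r (1−t)^{l_i} t^{d_i}) / (1−t)^{n+1}. -/
open MvPolynomial
open Fin.NatCast

/-!
Every monomial of a stable ideal factors uniquely as `x^{A_i} · x^C` with a minimal generator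
`x^{A_i}` and `x^C` a monomial in `x_{l_i}, …, x_n` only (Eliahou–Kervaire): peel off the last
variable of a monomial as long as the quotient stays in `I`. Since the monomials of degree `j`
outside `I` form a basis of `[R/I]_j`, this gives
`H_{R/I}(t) = 1/(1-t)^{n+1} - Σ_i t^{d_i}/(1-t)^{n+1-l_i}`, the `i`-th term counting monomials
in the `n+1-l_i` variables `x_{l_i}, …, x_n`.
-/

open MvPolynomial Finset

theorem Finset.mem_finsuppAntidiag_iff_degree {ι : Type*} [DecidableEq ι] {s : Finset ι}
    {m : ℕ} {f : ι →₀ ℕ} : f ∈ s.finsuppAntidiag m ↔ f.degree = m ∧ f.support ⊆ s :=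
  mem_finsuppAntidiag'

namespace PowerSeries

theorem mk_card_finsuppAntidiag {ι : Type*} [DecidableEq ι] (S : Type*) [CommRing S]
    (s : Finset ι) : mk (fun m => (#(s.finsuppAntidiag m) : S)) = (invOneSubPow S #s).val := by
  rcases s.eq_empty_or_nonempty with rfl | hs
  · ext m
    rcases eq_or_ne m 0 with rfl | hm <;> simp [finsuppAntidiag_empty, invOneSubPow_zero, *]
  · rw [invOneSubPow_val_eq_mk_sub_one_add_choose_of_pos _ _ hs.card_pos]
    ext m
    rw [coeff_mk, coeff_mk, card_finsuppAntidiag_nat_eq_choose, Nat.sub_add_comm hs.card_pos,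
      Nat.choose_symm_add]

theorem one_sub_pow_card_mul_mk_card_finsuppAntidiag {ι : Type*} [DecidableEq ι] (S : Type*)
    [CommRing S] (s : Finset ι) :
    (1 - X : S⟦X⟧) ^ #s * mk (fun m => (#(s.finsuppAntidiag m) : S)) = 1 := by
  rw [mk_card_finsuppAntidiag, ← invOneSubPow_inv_eq_one_sub_pow]
  exact (invOneSubPow S #s).inv_val

end PowerSeries

open Classical in
theorem hilbF_add_card_filter_exists_le {K σ : Type*} [Field K] [Fintype σ] [DecidableEq σ]
    (S : Set (σ →₀ ℕ)) (j : ℕ) :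
    hilbF (Ideal.span ((fun s => monomial s (1 : K)) '' S)) j
        + #{d ∈ (univ : Finset σ).finsuppAntidiag j | ∃ s ∈ S, s ≤ d}
      = #((univ : Finset σ).finsuppAntidiag j) := by
  set I := Ideal.span ((fun s => monomial s (1 : K)) '' S)
  set U := (univ : Finset σ).finsuppAntidiag j
  set T := {d ∈ U | ∃ s ∈ S, s ≤ d}
  have finrank_restrictSupport (V : Finset (σ →₀ ℕ)) :
      Module.finrank K (restrictSupport K (V : Set (σ →₀ ℕ))) = #V := by
    rw [Module.finrank_eq_nat_card_basis (basisRestrictSupport K _), Nat.card_coe_set_eq,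
      Set.ncard_coe_finset]
  have hU : homogeneousSubmodule σ K j = restrictSupport K (U : Set (σ →₀ ℕ)) := by
    rw [homogeneousSubmodule_eq_finsupp_supported]
    congr 1
    ext d
    simp [U, Finsupp.degree_eq_sum]
  set g := (Ideal.Quotient.mkₐ K I).toLinearMap ∘ₗ (homogeneousSubmodule σ K j).subtype
  have hker : LinearMap.ker g
      = (restrictSupport K (T : Set (σ →₀ ℕ))).comap (homogeneousSubmodule σ K j).subtype := by
    ext ⟨x, hx⟩
    rw [hU, mem_restrictSupport_iff] at hx
    simp only [g, LinearMap.mem_ker, LinearMap.comp_apply, Submodule.subtype_apply,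
      AlgHom.toLinearMap_apply, Ideal.Quotient.mkₐ_eq_mk, Ideal.Quotient.eq_zero_iff_mem,
      Submodule.mem_comap, mem_restrictSupport_iff, I, mem_ideal_span_monomial_image]
    exact ⟨fun h d hd => mem_filter.2 ⟨hx hd, h d hd⟩, fun h d hd => (mem_filter.1 (h hd)).2⟩
  have hTU : restrictSupport K (T : Set (σ →₀ ℕ)) ≤ homogeneousSubmodule σ K j :=
    hU ▸ restrictSupport_mono K (coe_subset.2 (filter_subset _ _))
  have : Module.Finite K (homogeneousSubmodule σ K j) :=
    Module.Finite.iff_fg.2 (homogeneousSubmodule_fg σ K j)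
  have hdim : Module.finrank K (homogeneousSubmodule σ K j) = #U := by
    rw [hU, finrank_restrictSupport]
  have hrange := LinearMap.finrank_range_add_finrank_ker g
  rwa [LinearMap.range_comp, Submodule.range_subtype, hker,
    (Submodule.comapSubtypeEquivOfLe hTU).finrank_eq, finrank_restrictSupport, hdim] at hrange

variable {n : ℕ}

theorem mdeg_eq_degree (A : Fin (n+1) →₀ ℕ) : mdeg A = A.degree :=
  (Finsupp.degree_eq_sum A).symm

theorem le_maxIdx {A : Fin (n+1) →₀ ℕ} {t : Fin (n+1)} (ht : t ∈ A.support) : t ≤ maxIdx A := by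
  obtain ⟨m, hm⟩ := Finset.max_of_mem ht
  rw [maxIdx, hm]
  exact WithBot.coe_le_coe.1 (hm ▸ Finset.le_max ht)

theorem maxIdx_mem_support {A : Fin (n+1) →₀ ℕ} (hA : A ≠ 0) : maxIdx A ∈ A.support := by
  obtain ⟨m, hm⟩ := Finset.max_of_nonempty (Finsupp.support_nonempty_iff.2 hA)
  rw [maxIdx, hm]
  exact Finset.mem_of_max hm

theorem apply_eq_zero_of_maxIdx_lt {A : Fin (n+1) →₀ ℕ} {t : Fin (n+1)} (ht : maxIdx A < t) :
    A t = 0 :=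
  Finsupp.notMem_support_iff.1 fun h => (le_maxIdx h).not_gt ht

theorem maxIdx_mono {A B : Fin (n+1) →₀ ℕ} (h : A ≤ B) : maxIdx A ≤ maxIdx B := by
  rcases eq_or_ne A 0 with rfl | hA
  · exact Fin.zero_le _
  · exact le_maxIdx (Finsupp.support_mono h (maxIdx_mem_support hA))

theorem le_or_le_of_add_eq_add {A B C D : Fin (n+1) →₀ ℕ} (h : A + C = B + D)
    (hC : C.support ⊆ Ici (maxIdx A)) (hD : D.support ⊆ Ici (maxIdx B)) : A ≤ B ∨ B ≤ A := by
  wlog hAB : maxIdx A ≤ maxIdx B generalizing A B C D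
  · exact (this h.symm hD hC (le_of_not_ge hAB)).symm
  have outside {E : Fin (n+1) →₀ ℕ} {l t : Fin (n+1)} (hE : E.support ⊆ Ici l) (ht : t < l) :
      E t = 0 :=
    Finsupp.notMem_support_iff.1 fun h => (mem_Ici.1 (hE h)).not_gt ht
  set a := maxIdx A
  have below (t) (ht : t < a) : A t = B t := by
    simpa [outside hC ht, outside hD (ht.trans_le hAB)] using DFunLike.congr_fun h t
  rcases le_or_gt (A a) (B a) with hle | hlt
  · refine Or.inl fun t => ?_
    rcases lt_trichotomy t a with ht | rfl | ht
    · exact (below t ht).le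
    · exact hle
    · simp [apply_eq_zero_of_maxIdx_lt ht]
  · have hBa : maxIdx B = a := by
      refine le_antisymm (not_lt.1 fun ha => ?_) hAB
      have := DFunLike.congr_fun h a
      simp only [Finsupp.add_apply, outside hD ha] at this
      omega
    refine Or.inr fun t => ?_
    rcases lt_trichotomy t a with ht | rfl | ht
    · exact (below t ht).ge
    · exact hlt.le
    · simp [apply_eq_zero_of_maxIdx_lt (hBa ▸ ht)]

section StableIdeal

variable {K : Type*} [Field K] {I : Ideal (PR K n)}

theorem mon_mem_of_le {B C : Fin (n+1) →₀ ℕ} (hC : (mon C : PR K n) ∈ I) (hCB : C ≤ B) :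
    (mon B : PR K n) ∈ I := by
  have : (mon B : PR K n) = mon (B - C) * mon C := by
    rw [mon, mon, mon, monomial_mul, one_mul, tsub_add_cancel_of_le hCB]
  exact this ▸ I.mul_mem_left _ hC

variable {r : ℕ} (A : Fin r → (Fin (n+1) →₀ ℕ))

theorem span_range_mon :
    Ideal.span (Set.range fun i => (mon (A i) : PR K n))
      = Ideal.span ((fun s => monomial s (1 : K)) '' Set.range A) := by
  rw [← Set.range_comp]
  rfl

theorem mon_mem_span_iff (B : Fin (n+1) →₀ ℕ) :
    (mon B : PR K n) ∈ Ideal.span (Set.range fun i => (mon (A i) : PR K n)) ↔ ∃ i, A i ≤ B := by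
  rw [span_range_mon, mon, mem_ideal_span_monomial_image]
  simp

variable {A}

theorem Stable.mon_sub_single_maxIdx_mem (hstab : Stable I) {B C : Fin (n+1) →₀ ℕ}
    (hC : (mon C : PR K n) ∈ I) (hCB : C < B) :
    (mon (B - Finsupp.single (maxIdx B) 1) : PR K n) ∈ I := by
  set m := maxIdx B
  -- Either `x_m ∣ x^B / x^C`, or `x_m` is also the last variable of `x^C` and stability
  -- replaces it by any `x_t` dividing `x^B / x^C`.
  obtain ⟨t, htB, htm⟩ : ∃ t, C t < B t ∧ (t = m ∨ C m = B m) := by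
    by_cases hm : C m = B m
    · obtain ⟨t, ht⟩ := Finsupp.lt_def.1 hCB |>.2
      exact ⟨t, ht, Or.inr hm⟩
    · exact ⟨m, lt_of_le_of_ne (hCB.le m) hm, Or.inl rfl⟩
  have hle : C + Finsupp.single t 1 ≤ B := fun s => by
    rcases eq_or_ne s t with rfl | hs
    · simpa using htB
    · simpa [Finsupp.single_apply, hs.symm] using hCB.le s
  refine mon_mem_of_le ?_ (tsub_le_tsub_right hle _)
  rcases htm with rfl | hCm
  · rwa [add_tsub_cancel_right]
  · have hBm : B m ≠ 0 :=
      Finsupp.mem_support_iff.1 (maxIdx_mem_support (ne_bot_of_gt hCB))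
    have hCmax : maxIdx C = m :=
      le_antisymm (maxIdx_mono hCB.le) (le_maxIdx (Finsupp.mem_support_iff.2 (hCm ▸ hBm)))
    have htm : t < m := lt_of_le_of_ne (le_maxIdx (Finsupp.mem_support_iff.2 (by omega)))
      (by rintro rfl; omega)
    have hC0 : C ≠ 0 := by rintro rfl; exact hBm hCm.symm
    exact hCmax ▸ hstab C hC0 hC t (hCmax ▸ htm)

theorem Stable.exists_eq_add_of_mon_mem (hstab : Stable I)
    (hspan : I = Ideal.span (Set.range fun i => (mon (A i) : PR K n)))
    {B : Fin (n+1) →₀ ℕ} (hB : (mon B : PR K n) ∈ I) :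
    ∃ i C, C.support ⊆ Ici (maxIdx (A i)) ∧ B = A i + C := by
  induction B using WellFoundedLT.induction with
  | _ B ih =>
  obtain ⟨i, hi⟩ := (mon_mem_span_iff A B).1 (hspan ▸ hB)
  rcases hi.eq_or_lt with h | h
  · exact ⟨i, 0, by simp, by simp [h]⟩
  set m := maxIdx B
  have hAi : (mon (A i) : PR K n) ∈ I := hspan ▸ (mon_mem_span_iff A (A i)).2 ⟨i, le_rfl⟩
  have hBm : B m ≠ 0 := Finsupp.mem_support_iff.1 (maxIdx_mem_support (ne_bot_of_gt h))
  have hm : Finsupp.single m 1 ≤ B := Finsupp.single_le_iff.2 (Nat.one_le_iff_ne_zero.2 hBm)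
  have hlt : B - Finsupp.single m 1 < B := by
    refine lt_of_le_of_ne tsub_le_self fun heq => ?_
    have := DFunLike.congr_fun heq m
    simp only [Finsupp.tsub_apply, Finsupp.single_eq_same] at this
    omega
  obtain ⟨i', C, hC, hBC⟩ := ih _ hlt (hstab.mon_sub_single_maxIdx_mem hAi h)
  refine ⟨i', C + Finsupp.single m 1, ?_, ?_⟩
  · refine Finsupp.support_add.trans (union_subset hC ?_)
    have : maxIdx (A i') ≤ m := maxIdx_mono ((le_self_add.trans_eq hBC.symm).trans tsub_le_self)
    simp [this]
  · rw [← add_assoc, ← hBC, tsub_add_cancel_of_le hm]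

theorem Stable.card_filter_exists_le (hstab : Stable I)
    (hspan : I = Ideal.span (Set.range fun i => (mon (A i) : PR K n)))
    (hmin : ∀ i i', A i ≤ A i' → i = i') (j : ℕ) :
    #{B ∈ (univ : Finset (Fin (n+1))).finsuppAntidiag j | ∃ i, A i ≤ B}
      = ∑ i, if mdeg (A i) ≤ j
          then #((Ici (maxIdx (A i))).finsuppAntidiag (j - mdeg (A i))) else 0 := by
  set F := fun i => if mdeg (A i) ≤ j
    then (Ici (maxIdx (A i))).finsuppAntidiag (j - mdeg (A i)) else ∅
  have mem_F {i C} : C ∈ F i ↔ C.support ⊆ Ici (maxIdx (A i)) ∧ mdeg (A i) + C.degree = j := by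
    simp only [F]
    split_ifs with hj
    · rw [mem_finsuppAntidiag_iff_degree]
      constructor
      · rintro ⟨hdeg, hC⟩
        exact ⟨hC, by omega⟩
      · rintro ⟨hC, hdeg⟩
        exact ⟨by omega, hC⟩
    · simp only [notMem_empty, false_iff, not_and]
      omega
  have himage : {B ∈ (univ : Finset (Fin (n+1))).finsuppAntidiag j | ∃ i, A i ≤ B}
      = (univ.sigma F).image fun p => A p.1 + p.2 := by
    ext B
    simp only [mem_filter, mem_image, mem_sigma, mem_univ, true_and, mem_F,
      mem_finsuppAntidiag_iff_degree, subset_univ, and_true, Sigma.exists, mdeg_eq_degree]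
    constructor
    · rintro ⟨rfl, hex⟩
      have hB := hspan ▸ (mon_mem_span_iff A B).2 hex
      obtain ⟨i, C, hC, rfl⟩ := hstab.exists_eq_add_of_mon_mem hspan hB
      exact ⟨i, C, ⟨hC, (map_add _ _ _).symm⟩, rfl⟩
    · rintro ⟨i, C, ⟨-, hdeg⟩, rfl⟩
      exact ⟨hdeg ▸ map_add _ _ _, i, le_self_add⟩
  have hinj : Set.InjOn (fun p : Σ _, Fin (n+1) →₀ ℕ => A p.1 + p.2) (univ.sigma F) := by
    rintro ⟨i, C⟩ hiC ⟨i', C'⟩ hiC' h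
    simp only [coe_sigma, Set.mem_sigma_iff, coe_univ, Set.mem_univ, true_and, mem_coe,
      mem_F] at hiC hiC' h
    obtain rfl : i = i' := (le_or_le_of_add_eq_add h hiC.1 hiC'.1).elim (hmin i i')
      fun h => (hmin i' i h).symm
    rw [add_right_inj] at h
    rw [h]
  rw [himage, card_image_of_injOn hinj, card_sigma]
  exact sum_congr rfl fun i _ => apply_ite card _ _ _

theorem Stable.mk_hilbF_eq (hstab : Stable I)
    (hspan : I = Ideal.span (Set.range fun i => (mon (A i) : PR K n)))
    (hmin : ∀ i i', A i ≤ A i' → i = i') :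
    PowerSeries.mk (fun j => (hilbF I j : ℚ))
      = PowerSeries.mk (fun j => (#((univ : Finset (Fin (n+1))).finsuppAntidiag j) : ℚ))
        - ∑ i, PowerSeries.X ^ mdeg (A i) *
          PowerSeries.mk fun j => (#((Ici (maxIdx (A i))).finsuppAntidiag j) : ℚ) := by
  classical
  ext j
  have h := hilbF_add_card_filter_exists_le (K := K) (Set.range A) j
  rw [← span_range_mon, ← hspan] at h
  simp only [map_sub, map_sum, PowerSeries.coeff_mk, PowerSeries.coeff_X_pow_mul']
  have hcard := congrArg (Nat.cast (R := ℚ)) (hstab.card_filter_exists_le hspan hmin j)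
  push_cast at hcard
  simp only [Set.exists_range_iff] at h
  rw [← hcard, ← h]
  push_cast
  ring

end StableIdeal

theorem hilbSeries_of_stable_general
    {K : Type*} [Field K] {n : ℕ} (I : Ideal (PR K n))
    (hstab : Stable I)
    (r : ℕ) (A : Fin r → (Fin (n+1) →₀ ℕ)) (hinj : Function.Injective A)
    (hspan : I = Ideal.span (Set.range fun i => (mon (A i) : PR K n)))
    (hgen : ∀ i, MinGen I (A i)) :
    (1 - PowerSeries.X : PowerSeries ℚ) ^ (n+1) *
        PowerSeries.mk (fun j => (hilbF I j : ℚ))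
      = 1 - ∑ i : Fin r,
          (1 - PowerSeries.X : PowerSeries ℚ) ^ ((maxIdx (A i) : ℕ)) *
            (PowerSeries.X : PowerSeries ℚ) ^ (mdeg (A i)) := by
  have hmin (i i' : Fin r) (h : A i ≤ A i') : i = i' :=
    hinj (by_contra fun hne => (hgen i').2 _ h hne (hgen i).1)
  have hall := PowerSeries.one_sub_pow_card_mul_mk_card_finsuppAntidiag ℚ
    (univ : Finset (Fin (n+1)))
  rw [card_univ, Fintype.card_fin] at hall
  rw [hstab.mk_hilbF_eq hspan hmin, mul_sub, hall, mul_sum]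
  refine congrArg _ (sum_congr rfl fun i _ => ?_)
  have hwindow := PowerSeries.one_sub_pow_card_mul_mk_card_finsuppAntidiag ℚ (Ici (maxIdx (A i)))
  rw [Fin.card_Ici] at hwindow
  have hsplit : (1 - PowerSeries.X : PowerSeries ℚ) ^ (n+1)
      = (1 - PowerSeries.X) ^ (maxIdx (A i) : ℕ)
        * (1 - PowerSeries.X) ^ (n + 1 - maxIdx (A i)) := by
    rw [← pow_add, Nat.add_sub_cancel' (maxIdx (A i)).is_lt.le]
  rw [hsplit]
  linear_combination
    (1 - PowerSeries.X) ^ (maxIdx (A i) : ℕ) * PowerSeries.X ^ mdeg (A i) * hwindow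

/-- the Hilbert series of a stable monomial ideal:
`(1−t)^{n+1} · H_{R/I}(t) = 1 − Σ_i (1−t)^{l_i} t^{d_i}`. -/
theorem hilbSeries_of_stable
    {K : Type*} [Field K] {n : ℕ} (I : Ideal (PR K n))
    (hmono : IsMonomialIdeal I) (hstab : Stable I)
    (r : ℕ) (A : Fin r → (Fin (n+1) →₀ ℕ)) (hinj : Function.Injective A)
    (hspan : I = Ideal.span (Set.range fun i => (mon (A i) : PR K n)))
    (hgen : ∀ i, MinGen I (A i)) :
    (1 - PowerSeries.X : PowerSeries ℚ) ^ (n+1) *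
        PowerSeries.mk (fun j => (hilbF I j : ℚ))
      = 1 - ∑ i : Fin r,
          (1 - PowerSeries.X : PowerSeries ℚ) ^ ((maxIdx (A i) : ℕ)) *
            (PowerSeries.X : PowerSeries ℚ) ^ (mdeg (A i)) :=
  hilbSeries_of_stable_general I hstab r A hinj hspan hgen
end
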